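/- arXiv:2209.09064 — 6 statements merged into one kernel-verified Lean document; each statement's English description precedes it below -/
import Mathlib

section
/- Let n, k be natural numbers, H : ℝⁿ × ℝⁿ → ℝ be differentiable, B : ℝⁿ → Matrix (Fin n) (Fin n) ℝ be such that B(q) is antisymmetric for every q, and η : Fin k → ℝⁿ → ℝⁿ be a family of covector fields. Suppose q, p : ℝ → ℝⁿ are differentiable curves and λ : Fin k → ℝ → ℝ are multiplier functions such that for all t: (i) q'(t) = ∇ₚH(q(t), p(t)); (ii) p'(t) = −∇_q H(q(t), p(t)) − B(q(t)) · q'(t) + Σᵢ λᵢ(t) ηᵢ(q(t)); and (iii) ⟨ηᵢ(q(t)), q'(t)⟩ = 0 for every i ∈ Fin k. Then the function t ↦ H(q(t), p(t)) is constant. -/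
/-!
Since `q̇ = ∇ₚH`, the rate of change of `H(q, p)` is `q̇ ⬝ ∇_q H + ṗ ⬝ q̇ = (ṗ + ∇_q H) ⬝ q̇`,
which by the equation of motion is the power `(-B q̇ + λⁱηᵢ) ⬝ q̇` of the magnetic and constraint
forces. The magnetic force does no work because `B` is antisymmetric, and the constraint forces do
none because `ηᵢ ⬝ q̇ = 0`.
-/

open Matrix

namespace Matrix

variable {ι R : Type*} [Fintype ι]

theorem dotProduct_mulVec_self_eq_zero_of_transpose_eq_neg [CommRing R] [IsAddTorsionFree R]
    {B : Matrix ι ι R} (hB : Bᵀ = -B) (v : ι → R) : v ⬝ᵥ B *ᵥ v = 0 := by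
  have h := dotProduct_transpose_mulVec B v v
  rwa [hB, neg_mulVec, dotProduct_neg, neg_eq_self] at h

theorem sum_smul_dotProduct_eq_zero {κ : Type*} [Fintype κ] [CommSemiring R] {η : κ → ι → R}
    {v : ι → R} (hη : ∀ j, η j ⬝ᵥ v = 0) (c : κ → R) : (∑ j, c j • η j) ⬝ᵥ v = 0 := by
  simp only [sum_dotProduct, smul_dotProduct, hη, smul_zero, Finset.sum_const_zero]

end Matrix

theorem LinearMap.apply_prod_eq_dotProduct {ι R : Type*} [Fintype ι] [DecidableEq ι]
    [CommSemiring R] (L : (ι → R) × (ι → R) →ₗ[R] R) (x y : ι → R) :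
    L (x, y) = x ⬝ᵥ (fun i => L (Pi.single i 1, 0)) + y ⬝ᵥ (fun i => L (0, Pi.single i 1)) := by
  have hsplit : L (x, y) = (L ∘ₗ LinearMap.inl R _ _) x + (L ∘ₗ LinearMap.inr R _ _) y := by
    simp [← map_add]
  conv_lhs => rw [hsplit, pi_eq_sum_univ' x, pi_eq_sum_univ' y]
  simp [dotProduct]

theorem deriv_apply_of_differentiableAt {𝕜 ι : Type*} [NontriviallyNormedField 𝕜] [Fintype ι]
    {F : ι → Type*} [∀ i, NormedAddCommGroup (F i)] [∀ i, NormedSpace 𝕜 (F i)]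
    {f : 𝕜 → ∀ i, F i} {t : 𝕜} (hf : DifferentiableAt 𝕜 f t) (i : ι) :
    deriv (fun s => f s i) t = deriv f t i :=
  ((hasDerivAt_pi.1 hf.hasDerivAt) i).deriv

section Hamiltonian

variable {ι : Type*} [Fintype ι] [DecidableEq ι]

noncomputable def gradFst (H : (ι → ℝ) × (ι → ℝ) → ℝ) (x : (ι → ℝ) × (ι → ℝ)) : ι → ℝ :=
  fun i => fderiv ℝ H x (Pi.single i 1, 0)

noncomputable def gradSnd (H : (ι → ℝ) × (ι → ℝ) → ℝ) (x : (ι → ℝ) × (ι → ℝ)) : ι → ℝ :=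
  fun i => fderiv ℝ H x (0, Pi.single i 1)

theorem hasDerivAt_comp_prodMk {H : (ι → ℝ) × (ι → ℝ) → ℝ} {q p : ℝ → ι → ℝ} {t : ℝ}
    (hH : DifferentiableAt ℝ H (q t, p t)) (hq : DifferentiableAt ℝ q t)
    (hp : DifferentiableAt ℝ p t) :
    HasDerivAt (fun s => H (q s, p s))
      (deriv q t ⬝ᵥ gradFst H (q t, p t) + deriv p t ⬝ᵥ gradSnd H (q t, p t)) t := by
  have h := hH.hasFDerivAt.comp_hasDerivAt t (hq.hasDerivAt.prodMk hp.hasDerivAt)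
  rwa [← ContinuousLinearMap.coe_coe, LinearMap.apply_prod_eq_dotProduct] at h

/-- Energy conservation for magnetic nonholonomic systems (coordinate form):
for any antisymmetric magnetic matrix field `B`, the Hamiltonian `H` is preserved
along solutions of `i_X ω_B = dH + λⁱ ηᵢ` with constraints `⟨ηᵢ(q), q̇⟩ = 0`. -/
theorem magnetic_nonholonomic_energy_conservation
    (n k : ℕ)
    (H : (Fin n → ℝ) × (Fin n → ℝ) → ℝ) (hH : Differentiable ℝ H)
    (B : (Fin n → ℝ) → Matrix (Fin n) (Fin n) ℝ)
    (hB : ∀ a i j, B a j i = - B a i j)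
    (η : Fin k → (Fin n → ℝ) → (Fin n → ℝ))
    (q p : ℝ → (Fin n → ℝ)) (hq : Differentiable ℝ q) (hp : Differentiable ℝ p)
    (lam : Fin k → ℝ → ℝ)
    (h1 : ∀ t i, deriv (fun s => q s i) t = fderiv ℝ H (q t, p t) (0, Pi.single i 1))
    (h2 : ∀ t i, deriv (fun s => p s i) t =
        - fderiv ℝ H (q t, p t) (Pi.single i 1, 0)
        - ∑ j, B (q t) i j * deriv (fun s => q s j) t
        + ∑ a, lam a t * η a (q t) i)
    (h3 : ∀ t i, ∑ j, η i (q t) j * deriv (fun s => q s j) t = 0) :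
    ∀ s t, H (q s, p s) = H (q t, p t) := by
  refine is_const_of_deriv_eq_zero (hH.comp (hq.prodMk hp)) fun t => ?_
  have h1 := h1 t
  have h2 := h2 t
  have hconstraint := h3 t
  simp only [deriv_apply_of_differentiableAt (hq t), deriv_apply_of_differentiableAt (hp t)]
    at h1 h2 hconstraint
  have hq' : deriv q t = gradSnd H (q t, p t) := funext h1
  have hp' : deriv p t = -gradFst H (q t, p t) - B (q t) *ᵥ deriv q t
      + ∑ a, lam a t • η a (q t) := by
    ext i
    simp [h2, gradFst, mulVec, dotProduct]
  have hskew : (B (q t))ᵀ = -B (q t) := by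
    ext i j
    exact hB _ i j
  rw [(hasDerivAt_comp_prodMk (hH _) (hq t) (hp t)).deriv]
  calc deriv q t ⬝ᵥ gradFst H (q t, p t) + deriv p t ⬝ᵥ gradSnd H (q t, p t)
      = (-(B (q t) *ᵥ deriv q t) + ∑ a, lam a t • η a (q t)) ⬝ᵥ deriv q t := by
        rw [← hq', hp', dotProduct_comm (deriv q t), ← add_dotProduct]
        congr 1
        abel
    _ = 0 := by
        rw [add_dotProduct, neg_dotProduct, dotProduct_comm (B (q t) *ᵥ _),
          dotProduct_mulVec_self_eq_zero_of_transpose_eq_neg hskew,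
          sum_smul_dotProduct_eq_zero hconstraint, neg_zero, add_zero]
end Hamiltonian
end

section
/- Let c > 0 and let v, ω, p_v, p_ω : ℝ → ℝ be differentiable curves satisfying the optimal control equations v' = cω² − c²ω²p_v + cωvp_ω, ω' = −ωv + cωvp_v − v²p_ω, p_v' = ωp_ω + vp_ω² − cωp_ωp_v, p_ω' = vp_ω − 2cωp_v + c²ωp_v² − cvp_ωp_v. Then the original energy E(t) = (1/2)·(v(t)²/c + ω(t)²) is constant in t. -/
/-!
The optimal control enters the sleigh equations `v' = c ω², ω' = -ω v` only through the magnetic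
force `(c ω B, -v B)` with `B = v p_ω - c ω p_v`. This force is orthogonal to the gradient
`(v / c, ω)` of the energy, so it does no work, and the energy is conserved exactly as for the
free sleigh.
-/

noncomputable def sleighEnergy (c v ω : ℝ) : ℝ := (1 / 2) * (v ^ 2 / c + ω ^ 2)

theorem hasDerivAt_sleighEnergy (c : ℝ) {v ω : ℝ → ℝ} {v' ω' t : ℝ}
    (hv : HasDerivAt v v' t) (hω : HasDerivAt ω ω' t) :
    HasDerivAt (fun s => sleighEnergy c (v s) (ω s)) (v t * v' / c + ω t * ω') t := by
  refine (((hv.fun_pow 2).div_const c).add (hω.fun_pow 2)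
    |>.const_mul (1 / 2)).congr_deriv ?_
  push_cast
  ring

theorem sleighEnergy_rate_magnetic_eq_zero {c : ℝ} (hc : c ≠ 0) (v ω B : ℝ) :
    v * (c * ω ^ 2 + c * ω * B) / c + ω * (-ω * v - v * B) = 0 := by
  field_simp
  ring

theorem sleighEnergy_eq_of_magnetic {c : ℝ} (hc : c ≠ 0) {v ω : ℝ → ℝ}
    (hv : Differentiable ℝ v) (hω : Differentiable ℝ ω) (B : ℝ → ℝ)
    (hv' : ∀ t, deriv v t = c * ω t ^ 2 + c * ω t * B t)
    (hω' : ∀ t, deriv ω t = -ω t * v t - v t * B t) (s t : ℝ) :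
    sleighEnergy c (v s) (ω s) = sleighEnergy c (v t) (ω t) := by
  have hE : ∀ t, HasDerivAt (fun s => sleighEnergy c (v s) (ω s)) 0 t := fun t => by
    have h := hasDerivAt_sleighEnergy c (hv t).hasDerivAt (hω t).hasDerivAt
    rwa [hv' t, hω' t, sleighEnergy_rate_magnetic_eq_zero hc] at h
  exact is_const_of_deriv_eq_zero (fun t => (hE t).differentiableAt)
    (fun t => (hE t).deriv) s t

theorem chaplygin_optimal_flow_energy_conservation_general
    (c : ℝ) (hc : 0 < c) (v ω pv pω : ℝ → ℝ)
    (hv : Differentiable ℝ v) (hω : Differentiable ℝ ω)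
    (h1 : ∀ t, deriv v t = c * (ω t) ^ 2 - c ^ 2 * (ω t) ^ 2 * pv t + c * ω t * v t * pω t)
    (h2 : ∀ t, deriv ω t = - ω t * v t + c * ω t * v t * pv t - (v t) ^ 2 * pω t) :
    ∀ s t, (1 / 2) * ((v s) ^ 2 / c + (ω s) ^ 2)
         = (1 / 2) * ((v t) ^ 2 / c + (ω t) ^ 2) := by
  refine sleighEnergy_eq_of_magnetic hc.ne' hv hω (fun t => v t * pω t - c * ω t * pv t) ?_ ?_
  · intro t
    rw [h1 t]
    ring
  · intro t
    rw [h2 t]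
    ring

/-- Along the optimal control equations of the magnetically controlled Chaplygin sleigh,
the original energy `E = (1/2)(v²/c + ω²)` is conserved. -/
theorem chaplygin_optimal_flow_energy_conservation
    (c : ℝ) (hc : 0 < c) (v ω pv pω : ℝ → ℝ)
    (hv : Differentiable ℝ v) (hω : Differentiable ℝ ω)
    (hpv : Differentiable ℝ pv) (hpω : Differentiable ℝ pω)
    (h1 : ∀ t, deriv v t = c * (ω t) ^ 2 - c ^ 2 * (ω t) ^ 2 * pv t + c * ω t * v t * pω t)
    (h2 : ∀ t, deriv ω t = - ω t * v t + c * ω t * v t * pv t - (v t) ^ 2 * pω t)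
    (h3 : ∀ t, deriv pv t = ω t * pω t + v t * (pω t) ^ 2 - c * ω t * pω t * pv t)
    (h4 : ∀ t, deriv pω t = v t * pω t - 2 * c * ω t * pv t + c ^ 2 * ω t * (pv t) ^ 2
        - c * v t * pω t * pv t) :
    ∀ s t, (1 / 2) * ((v s) ^ 2 / c + (ω s) ^ 2)
         = (1 / 2) * ((v t) ^ 2 / c + (ω t) ^ 2) :=
  chaplygin_optimal_flow_energy_conservation_general c hc v ω pv pω hv hω h1 h2
end

section
/- Let c > 0 and let α, B : ℝ → ℝ be functions with α twice differentiable and B differentiable, satisfying α'(t) = B(t)/c − sin α(t) and B'(t) = B(t)·cos α(t) for all t. Then α''(t) = (1/2)·sin(2·α(t)) for all t. In particular this holds for every value of c. -/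
/-! Differentiating `α̇ = B/c − sin α` and substituting `Ḃ = B cos α`, the two terms
`B cos α / c` cancel and what remains is `sin α cos α = (1/2) sin 2α`. -/

open Real

theorem hasDerivAt_deriv_of_deriv_eq_div_sub_sin {α B : ℝ → ℝ} {B' c t : ℝ}
    (hα : DifferentiableAt ℝ α t) (hB : HasDerivAt B B' t)
    (h1 : ∀ s, deriv α s = B s / c - sin (α s)) :
    HasDerivAt (deriv α) (B' / c - cos (α t) * deriv α t) t := by
  have hrhs : HasDerivAt (fun s ↦ B s / c - sin (α s)) (B' / c - cos (α t) * deriv α t) t :=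
    (hB.div_const c).sub ((hasDerivAt_sin (α t)).comp t hα.hasDerivAt)
  rwa [← funext h1] at hrhs

theorem chaplygin_reduced_pendulum_equation_general
    (c : ℝ) (α B : ℝ → ℝ)
    (hα : Differentiable ℝ α)
    (hB : Differentiable ℝ B)
    (h1 : ∀ t, deriv α t = B t / c - Real.sin (α t))
    (h2 : ∀ t, deriv B t = B t * Real.cos (α t)) :
    ∀ t, deriv (deriv α) t = (1 / 2) * Real.sin (2 * α t) := by
  intro t
  rw [(hasDerivAt_deriv_of_deriv_eq_div_sub_sin (hα t) (hB t).hasDerivAt h1).deriv,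
    h2 t, h1 t, sin_two_mul]
  ring

/-- Eliminating `B` from `α̇ = B/c − sin α`, `Ḃ = B cos α` yields the nonlinear
pendulum equation `α̈ = (1/2) sin(2α)`, for every value of `c > 0`. -/
theorem chaplygin_reduced_pendulum_equation
    (c : ℝ) (hc : 0 < c) (α B : ℝ → ℝ)
    (hα : Differentiable ℝ α) (hα' : Differentiable ℝ (deriv α))
    (hB : Differentiable ℝ B)
    (h1 : ∀ t, deriv α t = B t / c - Real.sin (α t))
    (h2 : ∀ t, deriv B t = B t * Real.cos (α t)) :
    ∀ t, deriv (deriv α) t = (1 / 2) * Real.sin (2 * α t) :=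
  chaplygin_reduced_pendulum_equation_general c α B hα hB h1 h2
end

section
/- Let c > 0 and let α, B : ℝ → ℝ be differentiable and satisfy α'(t) = B(t)/c − sin α(t) and B'(t) = B(t)·cos α(t) for all t. If B(0) > 0 and B(0) = 2c·sin α(0), then for all t ∈ ℝ: B(t) = 2c·sin α(t) and α'(t) = sin α(t). -/
/-!
Along solutions of the system, the defect `G = B − 2c sin α` satisfies the linear equation
`G' = −cos α · G`, whose coefficient is bounded by `1`. By uniqueness of solutions of Lipschitz
ODEs, `G(0) = 0` forces `G ≡ 0`.
-/

open Real

theorem eq_zero_of_hasDerivAt_smul_self {E : Type*} [NormedAddCommGroup E] [NormedSpace ℝ E]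
    {G : ℝ → E} {a : ℝ → ℝ} {K : NNReal} {t₀ : ℝ} (ha : ∀ t, ‖a t‖₊ ≤ K)
    (hG : ∀ t, HasDerivAt G (a t • G t) t) (h₀ : G t₀ = 0) : G = 0 :=
  ODE_solution_unique_univ (v := fun t x => a t • x) (s := fun _ => Set.univ)
    (fun t => ((lipschitzWith_smul (a t)).weaken (ha t)).lipschitzOnWith)
    (fun t => ⟨hG t, trivial⟩)
    (fun t => ⟨by simp, trivial⟩) h₀

theorem hasDerivAt_sub_two_mul_sin {c t : ℝ} {α B : ℝ → ℝ} (hc : c ≠ 0)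
    (hα : HasDerivAt α (B t / c - sin (α t)) t) (hB : HasDerivAt B (B t * cos (α t)) t) :
    HasDerivAt (fun s => B s - 2 * c * sin (α s))
      (-cos (α t) * (B t - 2 * c * sin (α t))) t := by
  refine (hB.sub (((hasDerivAt_sin (α t)).comp t hα).const_mul (2 * c))).congr_deriv ?_
  field_simp
  ring

theorem chaplygin_reduced_heteroclinic_invariant_general
    (c : ℝ) (hc : 0 < c) (α B : ℝ → ℝ)
    (hα : Differentiable ℝ α) (hB : Differentiable ℝ B)
    (h1 : ∀ t, deriv α t = B t / c - Real.sin (α t))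
    (h2 : ∀ t, deriv B t = B t * Real.cos (α t))
    (hinit : B 0 = 2 * c * Real.sin (α 0)) :
    ∀ t : ℝ, B t = 2 * c * Real.sin (α t) ∧ deriv α t = Real.sin (α t) := by
  have hdefect : (fun s => B s - 2 * c * sin (α s)) = 0 :=
    eq_zero_of_hasDerivAt_smul_self (a := fun t => -cos (α t)) (K := 1) (t₀ := 0)
      (fun t => by simpa [← NNReal.coe_le_coe] using abs_cos_le_one (α t))
      (fun t => hasDerivAt_sub_two_mul_sin hc.ne' (h1 t ▸ (hα t).hasDerivAt)
        (h2 t ▸ (hB t).hasDerivAt))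
      (sub_eq_zero.2 hinit)
  intro t
  have hBt : B t = 2 * c * sin (α t) := sub_eq_zero.1 (congrFun hdefect t)
  refine ⟨hBt, ?_⟩
  rw [h1 t, hBt]
  field_simp
  ring

/-- The curve `B = 2c sin α` with `B > 0` is invariant under the reduced optimal control
system `α̇ = B/c − sin α`, `Ḃ = B cos α`, and on it the dynamics is `α̇ = sin α`. -/
theorem chaplygin_reduced_heteroclinic_invariant
    (c : ℝ) (hc : 0 < c) (α B : ℝ → ℝ)
    (hα : Differentiable ℝ α) (hB : Differentiable ℝ B)
    (h1 : ∀ t, deriv α t = B t / c - Real.sin (α t))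
    (h2 : ∀ t, deriv B t = B t * Real.cos (α t))
    (hB0 : 0 < B 0) (hinit : B 0 = 2 * c * Real.sin (α 0)) :
    ∀ t : ℝ, B t = 2 * c * Real.sin (α t) ∧ deriv α t = Real.sin (α t) :=
  chaplygin_reduced_heteroclinic_invariant_general c hc α B hα hB h1 h2 hinit
end

section
/- Let c > 0 and let α, B : ℝ → ℝ be differentiable and satisfy α'(t) = B(t)/c − sin α(t) and B'(t) = B(t)·cos α(t) for all t, with B(0) > 0 and conserved value h := B(0)²/(2c) − B(0)·sin α(0) > 0. If there exists t₁ with α(t₁) = π/2, then B(t₁) > 2c. -/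
/-!
Along a solution, `B` solves the linear equation `Ḃ = (cos α) B`, so `B · exp (-∫ cos α)` is constant
and `B` keeps the sign of `B(0)`. The Hamiltonian `B²/(2c) − B sin α` is conserved, so at a time with
`α = π/2` it reads `B²/(2c) − B = B (B − 2c)/(2c) > 0`, which for `B > 0` means `B > 2c`.
-/

open Real

theorem mul_exp_neg_integral_eq_of_hasDerivAt {f g : ℝ → ℝ} (hg : Continuous g)
    (hf : ∀ t, HasDerivAt f (f t * g t) t) (a t : ℝ) :
    f t * exp (-∫ s in a..t, g s) = f a := by
  have hderiv : ∀ u, HasDerivAt (fun u => f u * exp (-∫ s in a..u, g s)) 0 u := by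
    intro u
    have hint := (hg.integral_hasStrictDerivAt a u).hasDerivAt
    exact ((hf u).mul hint.neg.exp).congr_deriv (by ring)
  have hconst := is_const_of_deriv_eq_zero (fun u => (hderiv u).differentiableAt)
    (fun u => (hderiv u).deriv) t a
  simpa using hconst

theorem pos_of_hasDerivAt_mul {f g : ℝ → ℝ} (hg : Continuous g)
    (hf : ∀ t, HasDerivAt f (f t * g t) t) {a : ℝ} (ha : 0 < f a) (t : ℝ) : 0 < f t := by
  have hinv := mul_exp_neg_integral_eq_of_hasDerivAt hg hf a t
  exact pos_of_mul_pos_left (hinv ▸ ha) (exp_pos _).le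

/-- The paper's `H_opt(α, B)`. -/
noncomputable def chaplyginHamiltonian (c α B : ℝ) : ℝ :=
  B ^ 2 / (2 * c) - B * sin α

theorem hasDerivAt_chaplyginHamiltonian {c : ℝ} (hc : c ≠ 0) {α B : ℝ → ℝ} {t : ℝ}
    (hα : HasDerivAt α (B t / c - sin (α t)) t) (hB : HasDerivAt B (B t * cos (α t)) t) :
    HasDerivAt (fun s => chaplyginHamiltonian c (α s) (B s)) 0 t := by
  refine (((hB.pow 2).div_const (2 * c)).sub (hB.mul hα.sin)).congr_deriv ?_
  field_simp
  ring

theorem chaplyginHamiltonian_eq_of_hasDerivAt {c : ℝ} (hc : c ≠ 0) {α B : ℝ → ℝ}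
    (hα : ∀ t, HasDerivAt α (B t / c - sin (α t)) t)
    (hB : ∀ t, HasDerivAt B (B t * cos (α t)) t) (t a : ℝ) :
    chaplyginHamiltonian c (α t) (B t) = chaplyginHamiltonian c (α a) (B a) :=
  have hderiv t := hasDerivAt_chaplyginHamiltonian hc (hα t) (hB t)
  is_const_of_deriv_eq_zero (fun t => (hderiv t).differentiableAt) (fun t => (hderiv t).deriv) t a

theorem two_mul_lt_of_chaplyginHamiltonian_pi_div_two_pos {c B : ℝ} (hc : 0 < c) (hB : 0 < B)
    (hH : 0 < chaplyginHamiltonian c (π / 2) B) : 2 * c < B := by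
  rw [chaplyginHamiltonian, sin_pi_div_two, mul_one, sub_pos, lt_div_iff₀ (by positivity)] at hH
  nlinarith

/-- Controllability bound: if the conserved value `h = B(0)²/(2c) − B(0) sin α(0)` is
positive and `B(0) > 0`, then whenever the trajectory reaches `α = π/2` the magnetic
field exceeds `2c`. -/
theorem chaplygin_reduced_minimum_field
    (c : ℝ) (hc : 0 < c) (α B : ℝ → ℝ)
    (hα : Differentiable ℝ α) (hB : Differentiable ℝ B)
    (h1 : ∀ t, deriv α t = B t / c - Real.sin (α t))
    (h2 : ∀ t, deriv B t = B t * Real.cos (α t))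
    (hB0 : 0 < B 0)
    (hh : 0 < (B 0) ^ 2 / (2 * c) - B 0 * Real.sin (α 0)) :
    ∀ t₁ : ℝ, α t₁ = Real.pi / 2 → 2 * c < B t₁ := by
  intro t₁ ht₁
  have hα' : ∀ t, HasDerivAt α (B t / c - sin (α t)) t := fun t => h1 t ▸ (hα t).hasDerivAt
  have hB' : ∀ t, HasDerivAt B (B t * cos (α t)) t := fun t => h2 t ▸ (hB t).hasDerivAt
  have hBpos : 0 < B t₁ := pos_of_hasDerivAt_mul (continuous_cos.comp hα.continuous) hB' hB0 t₁
  have hH : chaplyginHamiltonian c (α t₁) (B t₁) = chaplyginHamiltonian c (α 0) (B 0) :=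
    chaplyginHamiltonian_eq_of_hasDerivAt hc.ne' hα' hB' t₁ 0
  refine two_mul_lt_of_chaplyginHamiltonian_pi_div_two_pos hc hBpos ?_
  rw [← ht₁, hH]
  exact hh
end

section
/- Let α : ℝ → ℝ be differentiable with α'(t) = sin α(t) for all t and α(0) ∈ (0, π). Then the function t ↦ 2·sin²(α(t)) is integrable over ℝ and ∫_{−∞}^{∞} 2·sin²(α(t)) dt = 4. -/
open MeasureTheory Set Filter Topology Real

/-!
The substitution `h = cos α` turns `α' = sin α` into the Riccati equation `h' = h² - 1`.
A solution with `|h 0| < 1` is decreasing, and the limits of a monotone solution must be rest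
points, so `h` runs from `1` at `-∞` to `-1` at `+∞`. Since `2 sin² α = (-2 cos α)' ≥ 0`, the cost
is the total increment of `-2 cos α`, namely `2 - (-2) = 4`.
-/

theorem eq_zero_of_tendsto_of_tendsto_deriv {f f' : ℝ → ℝ} {L c : ℝ}
    (hf : ∀ t, HasDerivAt f (f' t) t) (hfL : Tendsto f atTop (𝓝 L))
    (hf'c : Tendsto f' atTop (𝓝 c)) : c = 0 := by
  have hmvt : ∀ t, ∃ ξ ∈ Ioo t (t + 1), f' ξ = f (t + 1) - f t := fun t => by
    obtain ⟨ξ, hξ, hslope⟩ := exists_hasDerivAt_eq_slope f f' (lt_add_one t)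
      (fun x _ => (hf x).continuousAt.continuousWithinAt) (fun x _ => hf x)
    exact ⟨ξ, hξ, by simpa using hslope⟩
  choose ξ hξ hξf using hmvt
  have hξ_top : Tendsto ξ atTop atTop := tendsto_atTop_mono (fun t => (hξ t).1.le) tendsto_id
  have hdiff : Tendsto (fun t => f (t + 1) - f t) atTop (𝓝 (L - L)) :=
    (hfL.comp (tendsto_atTop_add_const_right _ 1 tendsto_id)).sub hfL
  rw [sub_self] at hdiff
  exact tendsto_nhds_unique (by simpa only [Function.comp_def, hξf] using hf'c.comp hξ_top) hdiff

theorem tendsto_atTop_of_hasDerivAt_sq_sub_one {h : ℝ → ℝ}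
    (hd : ∀ t, HasDerivAt h (h t ^ 2 - 1) t) (hbound : ∀ t, h t ∈ Icc (-1) 1) (h0 : h 0 < 1) :
    Tendsto h atTop (𝓝 (-1)) := by
  have hanti : Antitone h :=
    antitone_of_hasDerivAt_nonpos hd fun t => by
      obtain ⟨hl, hu⟩ := hbound t; simp only [Pi.zero_apply]; nlinarith
  have hbdd : BddBelow (range h) := ⟨-1, forall_mem_range.2 fun t => (hbound t).1⟩
  have hlim := tendsto_atTop_ciInf hanti hbdd
  have hroot : (⨅ t, h t) ^ 2 - 1 = 0 :=
    eq_zero_of_tendsto_of_tendsto_deriv hd hlim ((hlim.pow 2).sub_const 1)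
  have hle : ⨅ t, h t ≤ h 0 := ciInf_le hbdd 0
  have hge : -1 ≤ ⨅ t, h t := le_ciInf fun t => (hbound t).1
  have hinf : ⨅ t, h t = -1 := by nlinarith
  rwa [hinf] at hlim

theorem tendsto_of_hasDerivAt_sq_sub_one {h : ℝ → ℝ}
    (hd : ∀ t, HasDerivAt h (h t ^ 2 - 1) t) (hbound : ∀ t, h t ∈ Icc (-1) 1)
    (h0 : h 0 ∈ Ioo (-1) 1) :
    Tendsto h atBot (𝓝 1) ∧ Tendsto h atTop (𝓝 (-1)) := by
  refine ⟨?_, tendsto_atTop_of_hasDerivAt_sq_sub_one hd hbound h0.2⟩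
  -- The equation is invariant under `(t, h) ↦ (-t, -h)`, which swaps the two ends.
  have hd' : ∀ t, HasDerivAt (fun t => -h (-t)) ((-h (-t)) ^ 2 - 1) t := fun t =>
    ((hd (-t)).comp t (hasDerivAt_neg t)).neg.congr_deriv (by ring)
  have hbound' : ∀ t, -h (-t) ∈ Icc (-1) 1 := fun t => by
    obtain ⟨hl, hu⟩ := hbound (-t); constructor <;> linarith
  have hreflected := (tendsto_atTop_of_hasDerivAt_sq_sub_one hd' hbound'
    (by rw [neg_zero]; linarith [h0.1])).neg
  simpa [Function.comp_def] using hreflected.comp tendsto_neg_atBot_atTop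

theorem integrable_deriv_of_nonneg_of_tendsto {g g' : ℝ → ℝ} {m n : ℝ}
    (hderiv : ∀ x, HasDerivAt g (g' x) x) (hpos : ∀ x, 0 ≤ g' x)
    (hbot : Tendsto g atBot (𝓝 m)) (htop : Tendsto g atTop (𝓝 n)) : Integrable g' := by
  have hcont : Continuous g := continuous_iff_continuousAt.2 fun x => (hderiv x).continuousAt
  have hint : ∀ a b : ℝ, IntervalIntegrable g' volume a b := fun a b =>
    intervalIntegral.intervalIntegrable_deriv_of_nonneg hcont.continuousOn
      (fun x _ => hderiv x) fun x _ => hpos x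
  have hFTC : ∀ i : ℝ, ∫ x in -i..i, ‖g' x‖ = g i - g (-i) := fun i => by
    simp_rw [Real.norm_of_nonneg (hpos _)]
    exact intervalIntegral.integral_eq_sub_of_hasDerivAt (fun x _ => hderiv x) (hint _ _)
  refine integrable_of_intervalIntegral_norm_tendsto (n - m)
    (fun i => (hint (-i) i).1) tendsto_neg_atTop_atBot tendsto_id ?_
  simpa only [hFTC, Function.comp_def] using htop.sub (hbot.comp tendsto_neg_atTop_atBot)

open MeasureTheory in
/-- The total running cost `∫ (1/2)B² dt = ∫ 2 sin²α dt` of the heteroclinic orbit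
`B = 2 sin α` (where `α̇ = sin α`, `α(0) ∈ (0, π)`) equals `4`. -/
theorem chaplygin_heteroclinic_cost
    (α : ℝ → ℝ) (hα : Differentiable ℝ α)
    (h1 : ∀ t, deriv α t = Real.sin (α t))
    (h0 : α 0 ∈ Set.Ioo 0 Real.pi) :
    Integrable (fun t : ℝ => 2 * Real.sin (α t) ^ 2) ∧
    ∫ t : ℝ, 2 * Real.sin (α t) ^ 2 = 4 := by
  have hαd : ∀ t, HasDerivAt α (sin (α t)) t := fun t => h1 t ▸ (hα t).hasDerivAt
  have hcos : ∀ t, HasDerivAt (fun t => cos (α t)) (cos (α t) ^ 2 - 1) t := fun t =>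
    (hαd t).cos.congr_deriv (by nlinarith [sin_sq_add_cos_sq (α t)])
  have hcos0 : cos (α 0) ∈ Ioo (-1) 1 := by
    have hmem : α 0 ∈ Icc 0 π := Ioo_subset_Icc_self h0
    constructor
    · simpa using strictAntiOn_cos hmem (right_mem_Icc.2 pi_pos.le) h0.2
    · simpa using strictAntiOn_cos (left_mem_Icc.2 pi_pos.le) hmem h0.1
  obtain ⟨hbot, htop⟩ := tendsto_of_hasDerivAt_sq_sub_one hcos
    (fun t => ⟨neg_one_le_cos _, cos_le_one _⟩) hcos0
  have hG : ∀ t, HasDerivAt (fun t => -2 * cos (α t)) (2 * sin (α t) ^ 2) t := fun t =>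
    ((hcos t).const_mul (-2)).congr_deriv (by nlinarith [sin_sq_add_cos_sq (α t)])
  have hint := integrable_deriv_of_nonneg_of_tendsto hG (fun t => by positivity)
    (hbot.const_mul _) (htop.const_mul _)
  refine ⟨hint, ?_⟩
  rw [integral_of_hasDerivAt_of_tendsto hG hint (hbot.const_mul _) (htop.const_mul _)]
  norm_num
end
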